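/- Let n = m·f be an odd square-free integer with f > 1 a nontrivial divisor, and let y = r·f for some integer r. Then ∑_{x ∈ (ℤ/nℤ)^*} (x/n)·ω_n^{xy} = 0, where ω_n = e^{2πi/n} and (·/n) is the Jacobi symbol. -/

import Mathlib

/-!
Pick a prime `p ∣ f` and, by the Chinese remainder theorem, an integer `c` that is a quadratic
nonresidue mod the odd prime `p` and `≡ 1` mod `n / p` (squarefreeness makes `p` and `n / p`
coprime).
Then `(c/n) = -1`, while `c * y ≡ y` mod `n` because `p ∣ y`. The substitution `x ↦ c * x`
permutes the reduced residues mod `n`, fixes `ω_n^{xy}` and flips the sign of `(x/n)`, so the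
sum equals its own negative.
-/

open Complex Real

open Finset in
theorem Finset.sum_filter_coprime_mul_mod {M : Type*} [AddCommMonoid M] {n c : ℕ}
    (hc : c.Coprime n) (g : ℕ → M) :
    ∑ x ∈ (range n).filter (·.Coprime n), g (c * x % n) =
      ∑ x ∈ (range n).filter (·.Coprime n), g x := by
  set S := (range n).filter (·.Coprime n)
  have hmaps : Set.MapsTo (fun x => c * x % n) S S := by
    intro x hx
    simp only [S, coe_filter, mem_range, Set.mem_ofPred_eq] at hx ⊢
    exact ⟨Nat.mod_lt _ (by omega), (ZMod.coprime_mod_iff_coprime _ _).2 (hc.mul_left hx.2)⟩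
  have hinj : Set.InjOn (fun x => c * x % n) S := by
    intro x hx y hy hxy
    simp only [S, coe_filter, mem_range, Set.mem_ofPred_eq] at hx hy
    have := Nat.ModEq.cancel_left_of_coprime (Nat.coprime_comm.1 hc) hxy
    rwa [Nat.ModEq, Nat.mod_eq_of_lt hx.1, Nat.mod_eq_of_lt hy.1] at this
  exact sum_nbij _ hmaps hinj (surjOn_of_injOn_of_card_le _ hmaps hinj le_rfl) fun _ _ => rfl

theorem Complex.exp_two_pi_mul_I_mul_div_eq_of_modEq {n a b : ℕ} [NeZero n]
    (h : a ≡ b [MOD n]) : exp (2 * π * I * a / n) = exp (2 * π * I * b / n) := by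
  rw [← ZMod.toCircle_natCast, ← ZMod.toCircle_natCast, (ZMod.natCast_eq_natCast_iff _ _ _).2 h]

theorem Nat.mul_modEq_of_modEq_one_of_dvd {a b c y : ℕ} (hc : c ≡ 1 [MOD a]) (hy : b ∣ y) :
    c * y ≡ y [MOD a * b] := by
  obtain ⟨t, rfl⟩ := hy
  simpa [mul_assoc] using (hc.mul_right' b).mul_right t

theorem exists_modEq_one_jacobiSym_eq_neg_one {p m : ℕ} [Fact p.Prime] (hp2 : p ≠ 2)
    (hpm : p.Coprime m) : ∃ c : ℕ, c ≡ 1 [MOD m] ∧ jacobiSym c (p * m) = -1 := by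
  obtain ⟨a, ha⟩ := FiniteField.exists_nonsquare (F := ZMod p) (by rwa [ZMod.ringChar_zmod_n])
  obtain ⟨c, hca, hc1⟩ := Nat.chineseRemainder hpm a.val 1
  refine ⟨c, hc1, ?_⟩
  have hm : m ≠ 0 := by
    rintro rfl
    exact (Fact.out : p.Prime).one_lt.ne' (Nat.coprime_zero_right p |>.1 hpm)
  have hJp : jacobiSym c p = -1 := by
    rw [← jacobiSym.legendreSym.to_jacobiSym, legendreSym.eq_neg_one_iff',
      (ZMod.natCast_eq_natCast_iff _ _ _).2 hca, ZMod.natCast_zmod_val]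
    exact ha
  have hJm : jacobiSym c m = 1 := by
    rw [jacobiSym.mod_left' (Int.natCast_modEq_iff.2 hc1), Nat.cast_one, jacobiSym.one_left]
  rw [jacobiSym.mul_right' _ (Fact.out : p.Prime).ne_zero hm, hJp, hJm, neg_one_mul]

theorem jacobiSym_mul_exp_mul_mod_eq_neg {n c y : ℕ} [NeZero n] (hJc : jacobiSym c n = -1)
    (hcy : c * y ≡ y [MOD n]) (x : ℕ) :
    (jacobiSym ((c * x % n : ℕ) : ℤ) n : ℂ) * exp (2 * π * I * ((c * x % n : ℕ) * y) / n) =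
      -((jacobiSym x n : ℂ) * exp (2 * π * I * (x * y) / n)) := by
  have hJ : jacobiSym ((c * x % n : ℕ) : ℤ) n = -jacobiSym x n := by
    rw [Int.natCast_mod, ← jacobiSym.mod_left, Nat.cast_mul, jacobiSym.mul_left, hJc, neg_one_mul]
  have hxy : c * x % n * y ≡ x * y [MOD n] :=
    calc c * x % n * y ≡ c * x * y [MOD n] := (Nat.mod_modEq _ _).mul_right _
      _ = x * (c * y) := by ring
      _ ≡ x * y [MOD n] := hcy.mul_left _
  have hE := exp_two_pi_mul_I_mul_div_eq_of_modEq hxy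
  push_cast at hE
  rw [hJ, hE]
  push_cast
  ring

theorem jacobi_fourier_vanishes_on_nonunits (n f m r : ℕ)
    (hodd : Odd n) (hsf : Squarefree n) (hn : n = m * f) (hf : 1 < f) :
    ∑ x ∈ (Finset.range n).filter (fun x => Nat.Coprime x n),
        (jacobiSym (x : ℤ) n : ℂ) *
          Complex.exp (2 * Real.pi * Complex.I * (x * (r * f)) / n) = 0 := by
  set p := f.minFac
  have := Fact.mk (Nat.minFac_prime hf.ne')
  have hpn : p ∣ n := (Nat.minFac_dvd f).trans ⟨m, hn.trans (mul_comm m f)⟩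
  have hp2 : p ≠ 2 := by
    rintro hp2
    exact Nat.not_even_iff_odd.2 (hodd.of_dvd_nat hpn) (hp2 ▸ even_two)
  obtain ⟨n', hn'⟩ := hpn
  obtain ⟨c, hc1, hJc⟩ :=
    exists_modEq_one_jacobiSym_eq_neg_one hp2 (Nat.coprime_of_squarefree_mul (hn' ▸ hsf))
  rw [← hn'] at hJc
  have : NeZero n := ⟨hsf.ne_zero⟩
  have hcn : c.Coprime n := by
    have := jacobiSym.eq_zero_iff_not_coprime.not_left.1 (by rw [hJc]; decide)
    rwa [Int.gcd_natCast_natCast] at this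
  have hcy : c * (r * f) ≡ r * f [MOD n] :=
    hn'.trans (mul_comm _ _) ▸
      Nat.mul_modEq_of_modEq_one_of_dvd hc1 ((Nat.minFac_dvd f).mul_left r)
  have hflip := jacobiSym_mul_exp_mul_mod_eq_neg hJc hcy
  push_cast at hflip
  rw [← self_eq_neg, ← Finset.sum_neg_distrib, ← Finset.sum_filter_coprime_mul_mod hcn]
  exact Finset.sum_congr rfl fun x _ => hflip x
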